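/- For each i ∈ {1,…,n}, the indeterminate a_i divides det C in the polynomial ring A = K[a_1,…,a_n,b_1,…,b_n] if and only if there exists a monic monomial u of degree d with i(u) = i such that u is not periodic under σ (equivalently, if and only if the reduction graph G_{B,d} has an i-labeled edge not contained in any directed cycle). -/

import Mathlib

open MvPolynomial

open Classical in
/-- The set of (exponent vectors of) monic monomials of total degree `dtot` in
`x_1, …, x_n`. -/
noncomputable def vertexSet (n dtot : ℕ) : Finset (Fin n →₀ ℕ) :=
  (Finset.Nat.antidiagonalTuple n dtot).map
    (Finsupp.equivFunOnFinite.symm.toEmbedding)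

/-- `leastLabel hn d α` is the least index `i` with `x_i^{d i} ∣ x^α`
(junk value if there is none). -/
noncomputable def leastLabel {n : ℕ} (hn : 0 < n) (d : Fin n → ℕ) (α : Fin n →₀ ℕ) :
    Fin n :=
  if h : (Finset.univ.filter (fun i => d i ≤ α i)).Nonempty then
    (Finset.univ.filter (fun i => d i ≤ α i)).min' h
  else ⟨0, hn⟩

/-- The step map `σ` of the reduction graph: `α` is sent along its unique outgoing edge,
labeled by the least index `i` with `x_i^{d i} ∣ x^α`, to `m i · x^α / x_i^{d i}`;
sinks are kept fixed. -/
noncomputable def stepFn {n : ℕ} (d : Fin n → ℕ) (m : Fin n → (Fin n →₀ ℕ))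
    (α : Fin n →₀ ℕ) : Fin n →₀ ℕ :=
  if h : (Finset.univ.filter (fun i => d i ≤ α i)).Nonempty then
    α - Finsupp.single ((Finset.univ.filter (fun i => d i ≤ α i)).min' h)
          (d ((Finset.univ.filter (fun i => d i ≤ α i)).min' h))
      + m ((Finset.univ.filter (fun i => d i ≤ α i)).min' h)
  else α

/-- `α` is periodic under the step map `σ`: some positive iterate returns to `α`. -/
def PeriodicPt {n : ℕ} (d : Fin n → ℕ) (m : Fin n → (Fin n →₀ ℕ))
    (α : Fin n →₀ ℕ) : Prop :=
  ∃ ℓ : ℕ, 1 ≤ ℓ ∧ (stepFn d m)^[ℓ] α = α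

open Classical in
/-- The forward `σ`-orbit of a degree-`dtot` monomial, as a subset of the vertices. -/
noncomputable def orbitOf {n : ℕ} (d : Fin n → ℕ) (m : Fin n → (Fin n →₀ ℕ))
    (dtot : ℕ) (α : Fin n →₀ ℕ) : Finset (Fin n →₀ ℕ) :=
  (vertexSet n dtot).filter (fun w => ∃ t : ℕ, (stepFn d m)^[t] α = w)

open Classical in
/-- The set of `σ`-orbits of periodic degree-`dtot` monomials, i.e. the directed cycles
of the reduction graph `G_{B,dtot}`. -/
noncomputable def orbitsSet {n : ℕ} (d : Fin n → ℕ) (m : Fin n → (Fin n →₀ ℕ))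
    (dtot : ℕ) : Finset (Finset (Fin n →₀ ℕ)) :=
  ((vertexSet n dtot).filter (PeriodicPt d m)).image (orbitOf d m dtot)

/-- The generator `f i = a_i x_i^{d i} − b_i m_i`, as a polynomial in `x_1, …, x_n`
over the coefficient ring `A = K[a_1,…,a_n,b_1,…,b_n]` (with `a_i`, `b_i` the
indeterminates `X (.inl i)`, `X (.inr i)`). -/
noncomputable def genPoly (K : Type*) [Field K] {n : ℕ} (d : Fin n → ℕ)
    (m : Fin n → (Fin n →₀ ℕ)) (i : Fin n) :
    MvPolynomial (Fin n) (MvPolynomial (Fin n ⊕ Fin n) K) :=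
  monomial (Finsupp.single i (d i)) (X (Sum.inl i))
    - monomial (m i) (X (Sum.inr i))

open Classical in
/-- The matrix `C` over `A = K[a_1,…,a_n,b_1,…,b_n]`, with rows and columns indexed by
the monic monomials of degree `dtot`, whose `(u,v)` entry is the coefficient of the
monomial `x^v` in `(x^u / x_{i(u)}^{d i(u)}) · f (i(u))`. -/
noncomputable def Cmat (K : Type*) [Field K] {n : ℕ} (hn : 0 < n) (d : Fin n → ℕ)
    (m : Fin n → (Fin n →₀ ℕ)) (dtot : ℕ) :
    Matrix ↥(vertexSet n dtot) ↥(vertexSet n dtot) (MvPolynomial (Fin n ⊕ Fin n) K) :=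
  fun u v => MvPolynomial.coeff (v : Fin n →₀ ℕ)
    ((monomial ((u : Fin n →₀ ℕ)
          - Finsupp.single (leastLabel hn d u) (d (leastLabel hn d u)))
        (1 : MvPolynomial (Fin n ⊕ Fin n) K))
      * genPoly K d m (leastLabel hn d u))

section PolyAux

variable {R : Type*} [CommRing R] {σ : Type*}

lemma prod_monomial {A : Type*} (s : Finset A) (e : A → (σ →₀ ℕ)) (c : A → R) :
    ∏ a ∈ s, (monomial (e a) (c a) : MvPolynomial σ R)
      = monomial (∑ a ∈ s, e a) (∏ a ∈ s, c a) := by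
  classical
  induction s using Finset.induction_on with
  | empty => simp
  | insert _ _ hx ih =>
      rw [Finset.prod_insert hx, Finset.sum_insert hx, Finset.prod_insert hx, ih,
        monomial_mul]

lemma not_X_dvd_of_coeff {p : MvPolynomial σ R} {μ : σ →₀ ℕ} {s : σ}
    (h0 : μ s = 0) (hc : coeff μ p ≠ 0) : ¬ X s ∣ p := by
  classical
  rintro ⟨q, rfl⟩
  apply hc
  rw [coeff_mul]
  apply Finset.sum_eq_zero
  rintro ⟨p₁, p₂⟩ hmem
  rw [Finset.HasAntidiagonal.mem_antidiagonal] at hmem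
  rw [coeff_X']
  by_cases h : Finsupp.single s 1 = p₁
  · exfalso
    have := congrArg (fun f : σ →₀ ℕ => f s) hmem
    simp [← h, Finsupp.add_apply] at this
    omega
  · simp [h]

lemma X_dvd_monomial_of_ne {ν : σ →₀ ℕ} {s : σ} (h : ν s ≠ 0) (c : R) :
    X s ∣ (monomial ν c : MvPolynomial σ R) := by
  classical
  refine ⟨monomial (ν - Finsupp.single s 1) c, ?_⟩
  rw [X, monomial_mul, one_mul, add_tsub_cancel_of_le]
  exact Finsupp.single_le_iff.mpr (Nat.one_le_iff_ne_zero.mpr h)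

lemma det_row_expansion {N : Type*} [DecidableEq N] [Fintype N] (M : Matrix N N R) :
    M.det = ∑ π : Equiv.Perm N, Equiv.Perm.sign π • ∏ u, M u (π u) := by
  rw [← Matrix.det_transpose, Matrix.det_apply]
  rfl

end PolyAux

section Abstract

variable {R : Type*} [CommRing R] {σ : Type*} {V : Type*} [Fintype V] [DecidableEq V]

/-- abstract form of the matrix `C`. -/
noncomputable def theMatrix (R : Type*) [CommRing R] {σ V : Type*} [DecidableEq V]
    (s : V → V) (a b : V → σ) : Matrix V V (MvPolynomial σ R) :=
  fun u v => if v = u then X (a u) else if v = s u then - X (b u) else 0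

variable (s : V → V) (a b : V → σ)

omit [Fintype V] in
lemma theMatrix_apply (u v : V) :
    theMatrix R s a b u v
      = if v = u then X (a u) else if v = s u then - X (b u) else 0 := rfl

lemma prod_valid (π : Equiv.Perm V) (hval : ∀ u, π u = u ∨ π u = s u) :
    ∏ u, theMatrix R s a b u (π u)
      = monomial
          (∑ u, if π u = u then Finsupp.single (a u) 1 else Finsupp.single (b u) 1)
          (∏ u, if π u = u then (1 : R) else -1) := by
  rw [← prod_monomial]
  apply Finset.prod_congr rfl
  intro u _
  by_cases h : π u = u
  · rw [if_pos h, if_pos h, theMatrix, if_pos h]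
    rfl
  · rcases hval u with h' | h'
    · exact absurd h' h
    · rw [if_neg h, if_neg h, theMatrix, if_neg (h'.symm ▸ h), if_pos h']
      rw [show (-1 : R) = -(1 : R) from rfl, map_neg]
      rfl

lemma prod_invalid (π : Equiv.Perm V) (hval : ¬ ∀ u, π u = u ∨ π u = s u) :
    ∏ u, theMatrix R s a b u (π u) = 0 := by
  push_neg at hval
  obtain ⟨u, h1, h2⟩ := hval
  apply Finset.prod_eq_zero (Finset.mem_univ u)
  rw [theMatrix, if_neg h1, if_neg h2]

omit [DecidableEq V] in
lemma supp_periodic (π : Equiv.Perm V) (hval : ∀ u, π u = u ∨ π u = s u)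
    (u : V) (h : π u ≠ u) : ∃ ℓ, 1 ≤ ℓ ∧ s^[ℓ] u = u := by
  have key : ∀ j : ℕ, (π ^ j) u = s^[j] u := by
    intro j
    induction j with
    | zero => simp
    | succ j ih =>
        have hcomm : π ((π ^ j) u) = (π ^ j) (π u) := by
          rw [← Equiv.Perm.mul_apply, ← Equiv.Perm.mul_apply, ← pow_succ, ← pow_succ']
        have hju : π ((π ^ j) u) ≠ (π ^ j) u := by
          rw [hcomm]
          intro hcon
          exact h ((π ^ j).injective hcon)
        have hstep : π ((π ^ j) u) = s ((π ^ j) u) := (hval _).resolve_left hju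
        calc (π ^ (j + 1)) u = π ((π ^ j) u) := by
              rw [pow_succ', Equiv.Perm.mul_apply]
          _ = s (s^[j] u) := by rw [hstep, ih]
          _ = s^[j + 1] u := (Function.iterate_succ_apply' s j u).symm
  refine ⟨orderOf π, orderOf_pos π, ?_⟩
  rw [← key, pow_orderOf_eq_one]
  rfl

theorem dvd_det_of_nonperiodic {t : σ} (u₀ : V)
    (ht : a u₀ = t) (hnp : ∀ ℓ, 1 ≤ ℓ → s^[ℓ] u₀ ≠ u₀) :
    X t ∣ (theMatrix R s a b).det := by
  classical
  rw [det_row_expansion]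
  apply Finset.dvd_sum
  intro π _
  rw [Units.smul_def, zsmul_eq_mul]
  apply Dvd.dvd.mul_left
  by_cases hval : ∀ u, π u = u ∨ π u = s u
  · rw [prod_valid s a b π hval]
    apply X_dvd_monomial_of_ne
    have hfix : π u₀ = u₀ := by
      by_contra hcon
      obtain ⟨ℓ, h1, h2⟩ := supp_periodic s π hval u₀ hcon
      exact hnp ℓ h1 h2
    have h1 : (if π u₀ = u₀ then Finsupp.single (a u₀) 1
        else Finsupp.single (b u₀) 1) t = 1 := by
      rw [if_pos hfix, ht, Finsupp.single_apply, if_pos rfl]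
    have hle : 1 ≤ (∑ u, if π u = u then Finsupp.single (a u) 1
        else Finsupp.single (b u) 1) t := by
      rw [Finset.sum_apply']
      calc (1 : ℕ) = (if π u₀ = u₀ then Finsupp.single (a u₀) 1
            else Finsupp.single (b u₀) 1) t := h1.symm
        _ ≤ _ := Finset.single_le_sum
            (f := fun u : V => (if π u = u then Finsupp.single (a u) 1
              else Finsupp.single (b u) 1) t)
            (fun v _ => Nat.zero_le _) (Finset.mem_univ u₀)
    omega
  · rw [prod_invalid s a b π hval]
    exact dvd_zero _

open Classical in
/-- counting functional: total mass on coordinates in the range of `a`. -/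
noncomputable def aMass (a : V → σ) (w : σ →₀ ℕ) : ℕ :=
  w.sum (fun j x => if ∃ u, a u = j then x else 0)

lemma aMass_sum {A : Type*} (st : Finset A) (e : A → (σ →₀ ℕ)) :
    aMass (V := V) a (∑ x ∈ st, e x) = ∑ x ∈ st, aMass (V := V) a (e x) := by
  classical
  exact (Finsupp.sum_finsetSum_index (fun i => by by_cases h : ∃ u, a u = i <;> simp [h])
    (fun i x y => by by_cases h : ∃ u, a u = i <;> simp [h])).symm

lemma aMass_single_a (u : V) : aMass (V := V) a (Finsupp.single (a u) 1) = 1 := by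
  classical
  rw [aMass, Finsupp.sum_single_index (by simp), if_pos ⟨u, rfl⟩]

lemma aMass_single_b (hab : ∀ u v : V, a u ≠ b v) (v : V) :
    aMass (V := V) a (Finsupp.single (b v) 1) = 0 := by
  classical
  rw [aMass, Finsupp.sum_single_index (by simp), if_neg]
  rintro ⟨u, hu⟩
  exact hab u v hu

theorem not_dvd_det [cR : Nontrivial R]
    (hsne : ∀ u : V, s u ≠ u)
    (hsP : ∀ u, (∃ ℓ, 1 ≤ ℓ ∧ s^[ℓ] u = u) → (∃ ℓ, 1 ≤ ℓ ∧ s^[ℓ] (s u) = s u))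
    (hsInj : ∀ u v, (∃ ℓ, 1 ≤ ℓ ∧ s^[ℓ] u = u) → (∃ ℓ, 1 ≤ ℓ ∧ s^[ℓ] v = v) →
      s u = s v → u = v)
    (hab : ∀ u v : V, a u ≠ b v)
    {t : σ} (ha : ∀ u, (∀ ℓ, 1 ≤ ℓ → s^[ℓ] u ≠ u) → a u ≠ t)
    (hb : ∀ u, b u ≠ t) :
    ¬ X t ∣ (theMatrix R s a b).det := by
  classical
  set P : V → Prop := fun u => ∃ ℓ, 1 ≤ ℓ ∧ s^[ℓ] u = u with hP
  set E₀ : V → (σ →₀ ℕ) := fun u =>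
    if P u then Finsupp.single (b u) 1 else Finsupp.single (a u) 1 with hE₀
  have hE₀u : ∀ u, E₀ u = if P u then Finsupp.single (b u) 1
      else Finsupp.single (a u) 1 := fun u => rfl
  set μ : σ →₀ ℕ := ∑ u, E₀ u with hμ
  -- μ t = 0
  have hμt : μ t = 0 := by
    rw [hμ, Finset.sum_apply']
    apply Finset.sum_eq_zero
    intro u _
    by_cases hPu : P u
    · rw [hE₀u]
      simp only [if_pos hPu]
      rw [Finsupp.single_apply, if_neg (hb u)]
    · have hau : a u ≠ t := by
        apply ha
        intro ℓ h1 h2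
        exact hPu ⟨ℓ, h1, h2⟩
      rw [hE₀u]
      simp only [if_neg hPu]
      rw [Finsupp.single_apply, if_neg hau]
  -- the permutation π₀
  have hg : Function.Injective (fun u : V => if P u then s u else u) := by
    intro u v huv
    simp only at huv
    by_cases hu : P u <;> by_cases hv : P v
    · rw [if_pos hu, if_pos hv] at huv
      exact hsInj u v hu hv huv
    · rw [if_pos hu, if_neg hv] at huv
      exact absurd (huv ▸ hsP u hu) hv
    · rw [if_neg hu, if_pos hv] at huv
      exact absurd (huv ▸ hsP v hv) hu
    · rw [if_neg hu, if_neg hv] at huv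
      exact huv
  let π₀ : Equiv.Perm V := Equiv.ofBijective _ (Finite.injective_iff_bijective.mp hg)
  have hπ₀app : ∀ u, π₀ u = if P u then s u else u := fun u => rfl
  have hval₀ : ∀ u, π₀ u = u ∨ π₀ u = s u := by
    intro u
    rw [hπ₀app]
    by_cases hu : P u
    · right; rw [if_pos hu]
    · left; rw [if_neg hu]
  -- uniqueness of the contributing permutation
  have hkey : ∀ π : Equiv.Perm V, (∀ u, π u = u ∨ π u = s u) →
      (∑ u, if π u = u then Finsupp.single (a u) 1 else Finsupp.single (b u) 1) = μ →
      π = π₀ := by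
    intro π hval hsum
    have hQF : ∀ u : V, ¬ P u → π u = u := by
      intro u hu
      by_contra h
      exact hu (supp_periodic s π hval u h)
    have keycard :
        (Finset.univ.filter (fun u : V => π u = u)).card
          = (Finset.univ.filter (fun u : V => ¬ P u)).card := by
      have c1 : aMass (V := V) a
          (∑ u, if π u = u then Finsupp.single (a u) 1 else Finsupp.single (b u) 1)
          = (Finset.univ.filter (fun u : V => π u = u)).card := by
        rw [aMass_sum]
        rw [Finset.card_filter]
        apply Finset.sum_congr rfl
        intro u _
        by_cases h : π u = u
        · rw [if_pos h, if_pos h, aMass_single_a]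
        · rw [if_neg h, if_neg h, aMass_single_b a b hab]
      have c2 : aMass (V := V) a μ
          = (Finset.univ.filter (fun u : V => ¬ P u)).card := by
        rw [hμ, aMass_sum, Finset.card_filter]
        apply Finset.sum_congr rfl
        intro u _
        by_cases h : P u
        · rw [hE₀u]; simp only [if_pos h, if_neg (not_not_intro h)]
          exact aMass_single_b a b hab u
        · rw [hE₀u]; simp only [if_neg h, if_pos h]
          exact aMass_single_a a u
      rw [← c1, ← c2, hsum]
    have hsubset : (Finset.univ.filter (fun u : V => ¬ P u))
        ⊆ (Finset.univ.filter (fun u : V => π u = u)) := by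
      intro u hu
      rw [Finset.mem_filter] at hu ⊢
      exact ⟨hu.1, hQF u hu.2⟩
    have heq : (Finset.univ.filter (fun u : V => π u = u))
        = (Finset.univ.filter (fun u : V => ¬ P u)) :=
      (Finset.eq_of_subset_of_card_le hsubset keycard.le).symm
    have hFQ : ∀ u : V, π u = u → ¬ P u := by
      intro u h
      have : u ∈ Finset.univ.filter (fun u : V => π u = u) := by
        rw [Finset.mem_filter]; exact ⟨Finset.mem_univ u, h⟩
      rw [heq, Finset.mem_filter] at this
      exact this.2
    ext u
    rw [hπ₀app]
    by_cases hu : P u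
    · rw [if_pos hu]
      have : π u ≠ u := fun h => hFQ u h hu
      exact (hval u).resolve_left this
    · rw [if_neg hu]
      exact hQF u hu
  -- the sum of exponents for π₀ equals μ
  have hsum₀ : (∑ u, if π₀ u = u then Finsupp.single (a u) 1
      else Finsupp.single (b u) 1) = μ := by
    rw [hμ]
    apply Finset.sum_congr rfl
    intro u _
    rw [hE₀u]
    by_cases hu : P u
    · have h1 : π₀ u ≠ u := by rw [hπ₀app u, if_pos hu]; exact hsne u
      rw [if_neg h1, if_pos hu]
    · have h1 : π₀ u = u := by rw [hπ₀app u, if_neg hu]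
      rw [if_pos h1, if_neg hu]
  -- the sign factor is nonzero
  have hcne : (∏ u, if π₀ u = u then (1 : R) else -1) ≠ 0 := by
    intro h
    have hsq : (∏ u, if π₀ u = u then (1 : R) else -1)
        * (∏ u, if π₀ u = u then (1 : R) else -1) = 1 := by
      rw [← Finset.prod_mul_distrib]
      apply Finset.prod_eq_one
      intro u _
      by_cases hu : π₀ u = u <;> simp [hu]
    rw [h, mul_zero] at hsq
    exact zero_ne_one hsq
  -- compute the coefficient of μ in the determinant
  have hcoeff : coeff μ (theMatrix R s a b).det
      = Equiv.Perm.sign π₀ • (∏ u, if π₀ u = u then (1 : R) else -1) := by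
    rw [det_row_expansion, coeff_sum]
    rw [Finset.sum_eq_single π₀]
    · rw [coeff_smul, prod_valid s a b π₀ hval₀, coeff_monomial, if_pos hsum₀]
    · intro π _ hπ
      rw [coeff_smul]
      by_cases hval : ∀ u, π u = u ∨ π u = s u
      · rw [prod_valid s a b π hval, coeff_monomial, if_neg, smul_zero]
        intro h
        exact hπ (hkey π hval h)
      · rw [prod_invalid s a b π hval, coeff_zero, smul_zero]
    · intro h
      exact absurd (Finset.mem_univ π₀) h
  apply not_X_dvd_of_coeff hμt
  rw [hcoeff]
  rcases Int.units_eq_one_or (Equiv.Perm.sign π₀) with h | h <;> rw [h]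
  · rw [one_smul]; exact hcne
  · rw [Units.smul_def, Units.val_neg, Units.val_one, neg_zsmul, one_zsmul]
    exact neg_ne_zero.mpr hcne

end Abstract

section Aux

variable {n : ℕ} (hn : 0 < n) (d : Fin n → ℕ) (m : Fin n → (Fin n →₀ ℕ)) (dtot : ℕ)

lemma mem_vertexSet_iff {α : Fin n →₀ ℕ} :
    α ∈ vertexSet n dtot ↔ ∑ i, α i = dtot := by
  classical
  simp [vertexSet, Finset.mem_map_equiv, Finset.Nat.mem_antidiagonalTuple]

variable (hd : ∀ i, 0 < d i) (hdtot : dtot = (∑ i, d i) - n + 1)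

include hd hdtot in
lemma filter_nonempty {α : Fin n →₀ ℕ} (hα : α ∈ vertexSet n dtot) :
    (Finset.univ.filter (fun i => d i ≤ α i)).Nonempty := by
  classical
  by_contra h
  rw [Finset.not_nonempty_iff_eq_empty, Finset.filter_eq_empty_iff] at h
  have h1 : ∀ i : Fin n, α i + 1 ≤ d i := by
    intro i
    exact Nat.succ_le_of_lt (lt_of_not_ge (h (Finset.mem_univ i)))
  have h2 : (∑ i, α i) + n ≤ ∑ i, d i := by
    calc (∑ i, α i) + n = ∑ i : Fin n, (α i + 1) := by
          rw [Finset.sum_add_distrib]; simp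
      _ ≤ ∑ i, d i := Finset.sum_le_sum fun i _ => h1 i
  have hsum : ∑ i, α i = dtot := (mem_vertexSet_iff _).mp hα
  have hnle : n ≤ ∑ i, d i := by
    calc n = ∑ _i : Fin n, 1 := by simp
      _ ≤ ∑ i, d i := Finset.sum_le_sum fun i _ => hd i
  omega

lemma leastLabel_eq {α : Fin n →₀ ℕ}
    (h : (Finset.univ.filter (fun i => d i ≤ α i)).Nonempty) :
    leastLabel hn d α = (Finset.univ.filter (fun i => d i ≤ α i)).min' h := by
  rw [leastLabel, dif_pos h]

lemma d_le_of_nonempty {α : Fin n →₀ ℕ}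
    (h : (Finset.univ.filter (fun i => d i ≤ α i)).Nonempty) :
    d (leastLabel hn d α) ≤ α (leastLabel hn d α) := by
  classical
  rw [leastLabel_eq hn d h]
  have := Finset.min'_mem _ h
  simpa using (Finset.mem_filter.mp this).2

lemma stepFn_eq {α : Fin n →₀ ℕ}
    (h : (Finset.univ.filter (fun i => d i ≤ α i)).Nonempty) :
    stepFn d m α
      = α - Finsupp.single (leastLabel hn d α) (d (leastLabel hn d α))
          + m (leastLabel hn d α) := by
  rw [stepFn, dif_pos h, leastLabel_eq hn d h]

include hd hdtot in
lemma single_le_of_mem {α : Fin n →₀ ℕ} (hα : α ∈ vertexSet n dtot) :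
    Finsupp.single (leastLabel hn d α) (d (leastLabel hn d α)) ≤ α :=
  Finsupp.single_le_iff.mpr
    (d_le_of_nonempty hn d (filter_nonempty d dtot hd hdtot hα))

variable (hmdeg : ∀ i, (∑ j, m i j) = d i)

include hn hd hdtot hmdeg in
lemma stepFn_mem {α : Fin n →₀ ℕ} (hα : α ∈ vertexSet n dtot) :
    stepFn d m α ∈ vertexSet n dtot := by
  classical
  have h := filter_nonempty d dtot hd hdtot hα
  set ℓ := leastLabel hn d α with hℓ
  have hle : Finsupp.single ℓ (d ℓ) ≤ α := single_le_of_mem hn d dtot hd hdtot hα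
  have key : stepFn d m α + Finsupp.single ℓ (d ℓ) = α + m ℓ := by
    rw [stepFn_eq hn d m h, ← hℓ]
    rw [add_right_comm, tsub_add_cancel_of_le hle]
  have hsingle : ∑ j, (Finsupp.single ℓ (d ℓ)) j = d ℓ := by
    rw [Finset.sum_eq_single ℓ]
    · simp
    · intro b _ hb; simp [Finsupp.single_apply, Ne.symm hb]
    · simp
  have hsum : (∑ j, stepFn d m α j) + d ℓ = (∑ j, α j) + d ℓ := by
    have := congrArg (fun f : Fin n →₀ ℕ => ∑ j, f j) key
    simpa [Finsupp.add_apply, Finset.sum_add_distrib, hsingle, hmdeg ℓ] using this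
  rw [mem_vertexSet_iff] at hα ⊢
  omega

variable (hmne : ∀ i, m i ≠ Finsupp.single i (d i))

include hn hd hdtot hmne in
lemma stepFn_ne {α : Fin n →₀ ℕ} (hα : α ∈ vertexSet n dtot) :
    stepFn d m α ≠ α := by
  classical
  have h := filter_nonempty d dtot hd hdtot hα
  set ℓ := leastLabel hn d α with hℓ
  have hle : Finsupp.single ℓ (d ℓ) ≤ α := single_le_of_mem hn d dtot hd hdtot hα
  intro hcon
  rw [stepFn_eq hn d m h, ← hℓ] at hcon
  have h2 : α - Finsupp.single ℓ (d ℓ) + Finsupp.single ℓ (d ℓ) = α :=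
    tsub_add_cancel_of_le hle
  have : m ℓ = Finsupp.single ℓ (d ℓ) := by
    have := hcon.trans h2.symm
    exact add_left_cancel this
  exact hmne ℓ this

end Aux

section CmatApply

variable {K : Type*} [Field K] {n : ℕ} (hn : 0 < n) (d : Fin n → ℕ)
  (m : Fin n → (Fin n →₀ ℕ)) (dtot : ℕ)

lemma Cmat_apply_aux {u v : Fin n →₀ ℕ}
    (hle : Finsupp.single (leastLabel hn d u) (d (leastLabel hn d u)) ≤ u)
    (hstep : stepFn d m u
      = u - Finsupp.single (leastLabel hn d u) (d (leastLabel hn d u))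
        + m (leastLabel hn d u))
    (hne : stepFn d m u ≠ u)
    (hu : u ∈ vertexSet n dtot) (hv : v ∈ vertexSet n dtot) :
    Cmat K hn d m dtot ⟨u, hu⟩ ⟨v, hv⟩
      = if v = u then X (Sum.inl (leastLabel hn d u))
        else if v = stepFn d m u then -X (Sum.inr (leastLabel hn d u)) else 0 := by
  classical
  set ℓ := leastLabel hn d u with hℓ
  have key : Cmat K hn d m dtot ⟨u, hu⟩ ⟨v, hv⟩
      = (if u = v then (X (Sum.inl ℓ) : MvPolynomial (Fin n ⊕ Fin n) K) else 0)
        - (if stepFn d m u = v then (X (Sum.inr ℓ) : MvPolynomial (Fin n ⊕ Fin n) K)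
            else 0) := by
    show MvPolynomial.coeff v _ = _
    rw [genPoly, mul_sub, monomial_mul, monomial_mul, one_mul, one_mul,
      tsub_add_cancel_of_le hle, coeff_sub, coeff_monomial, coeff_monomial,
      ← hstep]
  rw [key]
  by_cases h1 : v = u
  · subst h1
    rw [if_pos rfl, if_pos rfl, if_neg hne, sub_zero]
  · rw [if_neg h1, if_neg (fun h => h1 h.symm), zero_sub]
    by_cases h2 : v = stepFn d m u
    · rw [if_pos h2, if_pos h2.symm]
    · rw [if_neg h2, if_neg (fun h => h2 h.symm), neg_zero]

end CmatApply

open Classical in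
/-- for each index `i`, the indeterminate `a_i` divides `det C` in
`A = K[a_1,…,a_n,b_1,…,b_n]` if and only if there is a monic monomial `u` of degree
`d = d_1 + ⋯ + d_n − n + 1` with label `i(u) = i` that is not periodic under `σ`
(equivalently, the reduction graph `G_{B,d}` has an `i`-labeled edge not contained in
any directed cycle). -/
theorem stmt8 {K : Type*} [Field K] {n : ℕ} (hn : 0 < n)
    (d : Fin n → ℕ) (hd : ∀ i, 0 < d i)
    (m : Fin n → (Fin n →₀ ℕ))
    (hmdeg : ∀ i, (∑ j, m i j) = d i)
    (hmne : ∀ i, m i ≠ Finsupp.single i (d i))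
    (dtot : ℕ) (hdtot : dtot = (∑ i, d i) - n + 1)
    (i : Fin n) :
    (X (Sum.inl i) : MvPolynomial (Fin n ⊕ Fin n) K) ∣ (Cmat K hn d m dtot).det ↔
      ∃ u ∈ vertexSet n dtot, leastLabel hn d u = i ∧ ¬ PeriodicPt d m u := by

  classical
  have hstep_mem : ∀ u : ↥(vertexSet n dtot), stepFn d m ↑u ∈ vertexSet n dtot :=
    fun u => stepFn_mem hn d m dtot hd hdtot hmdeg u.2
  set sf : ↥(vertexSet n dtot) → ↥(vertexSet n dtot) :=
    fun u => ⟨stepFn d m ↑u, hstep_mem u⟩ with hsf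
  have hsfcoe : ∀ u, (sf u : Fin n →₀ ℕ) = stepFn d m ↑u := fun u => rfl
  have hsne : ∀ u, sf u ≠ u := by
    intro u h
    exact stepFn_ne hn d m dtot hd hdtot hmne u.2 (congrArg Subtype.val h)
  have hiter : ∀ (k : ℕ) (u), ((sf^[k] u : ↥(vertexSet n dtot)) : Fin n →₀ ℕ)
      = (stepFn d m)^[k] ↑u := by
    intro k
    induction k with
    | zero => intro u; rfl
    | succ k ih =>
        intro u
        rw [Function.iterate_succ_apply', Function.iterate_succ_apply', hsfcoe, ih]
  have hperiff : ∀ u : ↥(vertexSet n dtot),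
      PeriodicPt d m ↑u ↔ ∃ ℓ, 1 ≤ ℓ ∧ sf^[ℓ] u = u := by
    intro u
    constructor
    · rintro ⟨ℓ, h1, h2⟩
      exact ⟨ℓ, h1, Subtype.ext (by rw [hiter]; exact h2)⟩
    · rintro ⟨ℓ, h1, h2⟩
      exact ⟨ℓ, h1, by rw [← hiter ℓ u]; exact congrArg Subtype.val h2⟩
  have hC : Cmat K hn d m dtot
      = theMatrix K sf (fun u => Sum.inl (leastLabel hn d ↑u))
          (fun u => Sum.inr (leastLabel hn d ↑u)) := by
    funext u v
    obtain ⟨u, hu⟩ := u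
    obtain ⟨v, hv⟩ := v
    rw [Cmat_apply_aux hn d m dtot (single_le_of_mem hn d dtot hd hdtot hu)
      (stepFn_eq hn d m (filter_nonempty d dtot hd hdtot hu))
      (stepFn_ne hn d m dtot hd hdtot hmne hu) hu hv]
    simp only [theMatrix_apply, Subtype.mk.injEq, hsf]
  rw [hC]
  constructor
  · intro hdvd
    by_contra hcon
    push_neg at hcon
    refine not_dvd_det sf _ _ hsne ?_ ?_ ?_ ?_ ?_ hdvd
    · rintro u ⟨ℓ, h1, h2⟩
      refine ⟨ℓ, h1, ?_⟩
      rw [← Function.iterate_succ_apply, Function.iterate_succ_apply', h2]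
    · rintro u v ⟨av, ha1, ha2⟩ ⟨bv, hb1, hb2⟩ h
      have hu' : sf^[av * bv] u = u := by
        rw [Function.iterate_mul]
        exact Function.IsFixedPt.iterate ha2 bv
      have hv' : sf^[av * bv] v = v := by
        rw [mul_comm, Function.iterate_mul]
        exact Function.IsFixedPt.iterate hb2 av
      obtain ⟨k, hk⟩ : ∃ k, av * bv = k + 1 := by
        have : 1 ≤ av * bv := Nat.one_le_iff_ne_zero.mpr (by positivity)
        exact ⟨av * bv - 1, by omega⟩
      calc u = sf^[av * bv] u := hu'.symm
        _ = sf^[k] (sf u) := by rw [hk, Function.iterate_succ_apply]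
        _ = sf^[k] (sf v) := by rw [h]
        _ = sf^[av * bv] v := by rw [hk, Function.iterate_succ_apply]
        _ = v := hv'
    · intro u v h
      exact Sum.inl_ne_inr h
    · intro u hnper h
      have hlab : leastLabel hn d ↑u = i := by
        injection h
      have hper : PeriodicPt d m ↑u := hcon ↑u u.2 hlab
      rw [hperiff u] at hper
      obtain ⟨ℓ, h1, h2⟩ := hper
      exact hnper ℓ h1 h2
    · intro u h
      exact Sum.inr_ne_inl h
  · rintro ⟨u0, hu0, hlab0, hnper0⟩
    refine dvd_det_of_nonperiodic sf _ _ (⟨u0, hu0⟩ : ↥(vertexSet n dtot)) ?_ ?_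
    · show Sum.inl (leastLabel hn d u0) = Sum.inl i
      rw [hlab0]
    · intro ℓ h1 h2
      exact hnper0 ((hperiff ⟨u0, hu0⟩).mpr ⟨ℓ, h1, h2⟩)
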